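/- For every natural number n, the integral over the real line of (H_{2n+1}(x)/x)^2 e^{-x^2} dx equals √π · 2^{2n+2} · (2n+1)!, where H_k denotes the k-th (physicists') Hermite polynomial. (Note H_{2n+1}(0) = 0, so H_{2n+1}(x)/x is a polynomial.) -/

import Mathlib

open MeasureTheory Real

/-- The physicists' Hermite polynomials, defined by
`H_{n+1}(x) = 2x H_n(x) - 2n H_{n-1}(x)` with `H_0 = 1`, `H_1 = 2x`. -/
noncomputable def hermiteH : ℕ → ℝ → ℝ
  | 0, _ => 1
  | 1, x => 2 * x
  | n + 2, x => 2 * x * hermiteH (n + 1) x - 2 * ((n : ℝ) + 1) * hermiteH n x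

/-! Write `H_{2n+1} = X · Q_n` (possible since `H_{2n+1}(0) = 0`). Dividing the recurrence
`H_{2n+3} = 2X H_{2n+2} - 2(2n+2) H_{2n+1}` by `X` gives `Q_{n+1} = 2 H_{2n+2} - 4(n+1) Q_n`.
As `deg Q_n = 2n`, `Q_n` is orthogonal to `H_{2n+2}` for the weight `e^{-x²}`, so
`‖Q_{n+1}‖² = 4 ‖H_{2n+2}‖² + 16 (n+1)² ‖Q_n‖²`, and the classical norms
`‖H_m‖² = √π 2^m m!` close the induction. Orthogonality and norms both come from
integrating by parts with `(H_m e^{-x²})' = -H_{m+1} e^{-x²}`, which turns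
`∫ p H_m e^{-x²}` into `∫ p^{(m)} e^{-x²}`. -/

open Polynomial

noncomputable def physHermite : ℕ → ℝ[X]
  | 0 => 1
  | n + 1 => 2 * X * physHermite n - derivative (physHermite n)

theorem physHermite_succ (n : ℕ) :
    physHermite (n + 1) = 2 * X * physHermite n - derivative (physHermite n) := rfl

theorem derivative_physHermite_succ (n : ℕ) :
    derivative (physHermite (n + 1)) = C (2 * ((n : ℝ) + 1)) * physHermite n := by
  induction n with
  | zero => simp [physHermite, ← C_ofNat]
  | succ n ih =>
    rw [physHermite_succ (n + 1), derivative_sub, derivative_mul, ih, derivative_C_mul,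
      physHermite_succ]
    simp only [derivative_mul, derivative_ofNat, derivative_X, map_mul, map_add, map_natCast,
      map_ofNat, map_one, Nat.cast_add, Nat.cast_one]
    ring

theorem physHermite_succ_succ (n : ℕ) :
    physHermite (n + 2)
      = 2 * X * physHermite (n + 1) - C (2 * ((n : ℝ) + 1)) * physHermite n := by
  rw [physHermite_succ (n + 1), derivative_physHermite_succ]

theorem hermiteH_eq_eval_physHermite :
    ∀ (n : ℕ) (x : ℝ), hermiteH n x = (physHermite n).eval x
  | 0, x => by simp [hermiteH, physHermite]
  | 1, x => by simp [hermiteH, physHermite]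
  | n + 2, x => by
    simp [hermiteH, physHermite_succ_succ, hermiteH_eq_eval_physHermite (n + 1),
      hermiteH_eq_eval_physHermite n]

theorem natDegree_physHermite_le (n : ℕ) : (physHermite n).natDegree ≤ n := by
  induction n with
  | zero => simp [physHermite]
  | succ n ih =>
    rw [physHermite_succ]
    refine (natDegree_sub_le _ _).trans (max_le ?_ ?_)
    · have h2X : (2 * X : ℝ[X]).natDegree ≤ 1 := by compute_degree
      exact (natDegree_mul_le_of_le h2X ih).trans (by omega)
    · exact (natDegree_derivative_le _).trans (by omega)

theorem iterate_derivative_physHermite_self (n : ℕ) :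
    derivative^[n] (physHermite n) = C (2 ^ n * n.factorial : ℝ) := by
  induction n with
  | zero => simp [physHermite]
  | succ n ih =>
    rw [Function.iterate_succ_apply, derivative_physHermite_succ, iterate_derivative_C_mul, ih,
      ← C_mul, Nat.factorial_succ]
    congr 1
    push_cast
    ring

theorem eval_zero_physHermite_odd (n : ℕ) : (physHermite (2 * n + 1)).eval 0 = 0 := by
  induction n with
  | zero => simp [physHermite]
  | succ n ih => simp [show 2 * (n + 1) + 1 = 2 * n + 1 + 2 by ring, physHermite_succ_succ, ih]

theorem integrable_eval_mul_exp_neg_sq (p : ℝ[X]) :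
    Integrable fun x : ℝ => p.eval x * exp (-x ^ 2) := by
  induction p using Polynomial.induction_on' with
  | add p q hp hq =>
    simp only [eval_add, add_mul]
    exact hp.add hq
  | monomial k a =>
    have hk := integrable_rpow_mul_exp_neg_mul_sq one_pos (s := k)
      (neg_one_lt_zero.trans_le k.cast_nonneg)
    simpa only [eval_monomial, rpow_natCast, neg_one_mul, mul_assoc] using hk.const_mul a

theorem integrable_eval_mul_eval_mul_exp_neg_sq (p q : ℝ[X]) :
    Integrable fun x : ℝ => p.eval x * (q.eval x * exp (-x ^ 2)) := by
  simpa only [eval_mul, mul_assoc] using integrable_eval_mul_exp_neg_sq (p * q)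

noncomputable def gaussianIntegral : ℝ[X] →ₗ[ℝ] ℝ where
  toFun p := ∫ x, p.eval x * exp (-x ^ 2)
  map_add' p q := by
    simp only [eval_add, add_mul]
    exact integral_add (integrable_eval_mul_exp_neg_sq p) (integrable_eval_mul_exp_neg_sq q)
  map_smul' c p := by
    simp only [eval_smul, smul_eq_mul, mul_assoc, RingHom.id_apply]
    exact integral_const_mul c _

theorem gaussianIntegral_apply (p : ℝ[X]) :
    gaussianIntegral p = ∫ x, p.eval x * exp (-x ^ 2) := rfl

theorem gaussianIntegral_C (c : ℝ) : gaussianIntegral (C c) = c * √π := by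
  simpa [gaussianIntegral_apply, integral_const_mul] using congrArg (c * ·) (integral_gaussian 1)

theorem gaussianIntegral_mul_physHermite_succ (p : ℝ[X]) (n : ℕ) :
    gaussianIntegral (p * physHermite (n + 1))
      = gaussianIntegral (derivative p * physHermite n) := by
  have hv : ∀ x, HasDerivAt (fun y => (physHermite n).eval y * exp (-y ^ 2))
      (-((physHermite (n + 1)).eval x * exp (-x ^ 2))) x := by
    intro x
    refine (((physHermite n).hasDerivAt x).fun_mul
      (hasDerivAt_pow 2 x).fun_neg.exp).congr_deriv ?_
    simp only [physHermite_succ, eval_sub, eval_mul, eval_ofNat, eval_X]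
    ring
  have hI := integrable_eval_mul_eval_mul_exp_neg_sq
  have key := integral_mul_deriv_eq_deriv_mul_of_integrable (fun x _ => p.hasDerivAt x)
    (fun x _ => hv x) (by simpa only [Pi.mul_def, Pi.neg_def, mul_neg] using (hI p _).neg)
    (hI _ _) (hI _ _)
  simp only [mul_neg, integral_neg, neg_inj] at key
  simpa only [gaussianIntegral_apply, eval_mul, mul_assoc] using key

theorem gaussianIntegral_mul_physHermite (p : ℝ[X]) (n : ℕ) :
    gaussianIntegral (p * physHermite n) = gaussianIntegral (derivative^[n] p) := by
  induction n generalizing p with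
  | zero => simp [physHermite]
  | succ n ih => rw [gaussianIntegral_mul_physHermite_succ, ih, Function.iterate_succ_apply]

theorem gaussianIntegral_mul_physHermite_of_natDegree_lt {p : ℝ[X]} {n : ℕ}
    (h : p.natDegree < n) : gaussianIntegral (p * physHermite n) = 0 := by
  rw [gaussianIntegral_mul_physHermite, iterate_derivative_eq_zero h, map_zero]

theorem gaussianIntegral_physHermite_mul_self (n : ℕ) :
    gaussianIntegral (physHermite n * physHermite n) = √π * 2 ^ n * n.factorial := by
  rw [gaussianIntegral_mul_physHermite, iterate_derivative_physHermite_self, gaussianIntegral_C]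
  ring

noncomputable def physHermiteOddDivX (n : ℕ) : ℝ[X] := (physHermite (2 * n + 1)).divX

theorem X_mul_physHermiteOddDivX (n : ℕ) :
    X * physHermiteOddDivX n = physHermite (2 * n + 1) := by
  simpa [physHermiteOddDivX, coeff_zero_eq_eval_zero, eval_zero_physHermite_odd] using
    X_mul_divX_add (physHermite (2 * n + 1))

theorem physHermiteOddDivX_zero : physHermiteOddDivX 0 = 2 := by
  refine mul_left_cancel₀ X_ne_zero ?_
  rw [X_mul_physHermiteOddDivX]
  simp [physHermite, mul_comm]

theorem physHermiteOddDivX_succ (n : ℕ) :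
    physHermiteOddDivX (n + 1)
      = 2 * physHermite (2 * n + 2) - C (2 * (2 * (n : ℝ) + 2)) * physHermiteOddDivX n := by
  refine mul_left_cancel₀ X_ne_zero ?_
  rw [X_mul_physHermiteOddDivX, show 2 * (n + 1) + 1 = 2 * n + 1 + 2 by ring,
    physHermite_succ_succ, ← X_mul_physHermiteOddDivX]
  push_cast
  ring_nf

theorem natDegree_physHermiteOddDivX_le (n : ℕ) : (physHermiteOddDivX n).natDegree ≤ 2 * n := by
  rw [physHermiteOddDivX, natDegree_divX_eq_natDegree_tsub_one]
  have := natDegree_physHermite_le (2 * n + 1)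
  omega

theorem gaussianIntegral_physHermiteOddDivX_mul_self (n : ℕ) :
    gaussianIntegral (physHermiteOddDivX n * physHermiteOddDivX n)
      = √π * 2 ^ (2 * n + 2) * (2 * n + 1).factorial := by
  induction n with
  | zero =>
    rw [physHermiteOddDivX_zero, ← C_ofNat, ← C_mul, gaussianIntegral_C]
    norm_num [mul_comm]
  | succ n ih =>
    set Q := physHermiteOddDivX n
    set H := physHermite (2 * n + 2)
    set a : ℝ := 2 * (2 * n + 2) with ha
    have hexpand : physHermiteOddDivX (n + 1) * physHermiteOddDivX (n + 1)
        = (4 : ℝ) • (H * H) - (4 * a) • (Q * H) + a ^ 2 • (Q * Q) := by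
      rw [show physHermiteOddDivX (n + 1) = 2 * H - C a * Q from physHermiteOddDivX_succ n]
      simp only [smul_eq_C_mul, map_mul, map_pow, map_ofNat]
      ring
    have horth : gaussianIntegral (Q * H) = 0 :=
      gaussianIntegral_mul_physHermite_of_natDegree_lt
        ((natDegree_physHermiteOddDivX_le n).trans_lt (by omega))
    simp only [hexpand, map_add, map_sub, map_smul, smul_eq_mul, horth, ih]
    rw [gaussianIntegral_physHermite_mul_self, ha,
      show 2 * (n + 1) + 1 = 2 * n + 1 + 1 + 1 by ring, Nat.factorial_succ (2 * n + 1 + 1),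
      Nat.factorial_succ (2 * n + 1)]
    push_cast
    ring

theorem hermite_odd_filter_integral (n : ℕ) :
    ∫ x : ℝ, (hermiteH (2 * n + 1) x / x) ^ 2 * Real.exp (-x ^ 2)
      = Real.sqrt π * 2 ^ (2 * n + 2) * ((2 * n + 1).factorial : ℝ) := by
  rw [← gaussianIntegral_physHermiteOddDivX_mul_self, gaussianIntegral_apply]
  refine integral_congr_ae ?_
  filter_upwards [compl_mem_ae_iff.mpr (measure_singleton (0 : ℝ))] with x hx
  rw [hermiteH_eq_eval_physHermite, ← X_mul_physHermiteOddDivX, eval_mul, eval_mul, eval_X,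
    mul_div_cancel_left₀ _ hx, sq]
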